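/- arXiv:2105.01973 — 3 statements merged into one kernel-verified Lean document; each statement's English description precedes it below -/
import Mathlib

section
/- Let k > m ≥ 1 be integers, let R > 0, and let 0 < ε < min(2, 3R). Let λ_1, …, λ_m be distinct real numbers with |λ_j| < ε/(6R(k−m)m) for all j ∈ {1,…,m}, and let V = Vander(λ, k). If a, b ∈ ℝ^k satisfy ‖a‖₂ ≤ R, ‖b‖₂ ≤ R, and aᵀV = bᵀV (i.e., the degree-(k−1) polynomials with coefficient vectors a and b agree at all m evaluation points λ_1,…,λ_m), then |a[i] − b[i]| ≤ ε for all i ∈ {1, …, m}. -/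
/-!
With `c = a - b`, the polynomial `P = ∑ cᵣ Xʳ` has degree `< k`, coefficients bounded by `2R`,
and vanishes at the distinct points `λⱼ`, so `P = E q` with `E = ∏ⱼ (X - λⱼ)`. By Vieta, all
roots of the monic `E` being smaller than `δ` makes its lower coefficients tiny:
`∑_{s<m} |Eₛ| ≤ (1 + δ)^m - 1 ≤ 2mδ ≤ 1`. Long division from the top then bounds the
coefficients of `q` by `2R(k - m)`, and for `i < m` the coefficient `Pᵢ = ∑_{s ≤ i} Eₛ q_{i-s}`
only sees the lower coefficients of `E`, whence `|Pᵢ| ≤ 2mδ · 2R(k - m) = 2ε/3`.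
-/

open Matrix

noncomputable def vander {m : ℕ} (lam : Fin m → ℝ) (k : ℕ) : Matrix (Fin k) (Fin m) ℝ :=
  fun r c => lam c ^ (r : ℕ)

open Polynomial Finset

lemma abs_le_of_sqrt_sum_sq_le {ι : Type*} [Fintype ι] {f : ι → ℝ} {R : ℝ}
    (hf : √(∑ i, f i ^ 2) ≤ R) (i : ι) : |f i| ≤ R :=
  (Real.abs_le_sqrt (single_le_sum (fun j _ => sq_nonneg (f j)) (mem_univ i))).trans hf

lemma one_add_pow_sub_one_le {x : ℝ} {n : ℕ} (hx : 0 ≤ x) (hnx : n * x ≤ 1) :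
    (1 + x) ^ n - 1 ≤ 2 * (n * x) := by
  have hnx0 : 0 ≤ n * x := by positivity
  calc (1 + x) ^ n - 1 ≤ Real.exp (n * x) - 1 := by
        rw [Real.exp_nat_mul]
        gcongr
        linarith [Real.add_one_le_exp x]
    _ ≤ |Real.exp (n * x) - 1| := le_abs_self _
    _ ≤ 2 * |n * x| := Real.abs_exp_sub_one_le (by rwa [abs_of_nonneg hnx0])
    _ = 2 * (n * x) := by rw [abs_of_nonneg hnx0]

namespace Polynomial

lemma Monic.coeff_mul_natDegree_add {R : Type*} [Semiring R] {E : R[X]} (hE : E.Monic)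
    (q : R[X]) (t : ℕ) :
    (E * q).coeff (E.natDegree + t) =
      q.coeff t + ∑ s ∈ range E.natDegree, E.coeff s * q.coeff (E.natDegree + t - s) := by
  set m := E.natDegree
  have htail : ∑ s ∈ range (m + 1), E.coeff s * q.coeff (m + t - s)
      = ∑ s ∈ range (m + t + 1), E.coeff s * q.coeff (m + t - s) := by
    refine sum_subset (range_subset_range.2 (by omega)) fun s _ hs => ?_
    rw [coeff_eq_zero_of_natDegree_lt (by simp at hs; omega), zero_mul]
  rw [coeff_mul, Nat.sum_antidiagonal_eq_sum_range_succ_mk, ← htail, sum_range_succ,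
    hE.coeff_natDegree, one_mul, Nat.add_sub_cancel_left, add_comm]

section NormedRing

variable {R : Type*} [NormedRing R]

lemma norm_coeff_ofFn_le [DecidableEq R] {k : ℕ} {v : Fin k → R} {B : ℝ} (hB : 0 ≤ B)
    (hv : ∀ i, ‖v i‖ ≤ B) (n : ℕ) : ‖(ofFn k v).coeff n‖ ≤ B := by
  rcases lt_or_ge n k with hn | hn
  · rw [ofFn_coeff_eq_val_of_lt v hn]
    exact hv _
  · rw [ofFn_coeff_eq_zero_of_ge v hn, norm_zero]
    exact hB

lemma norm_coeff_mul_le_of_lt (E : R[X]) {q : R[X]} {B : ℝ} (hq : ∀ t, ‖q.coeff t‖ ≤ B)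
    {n i : ℕ} (hi : i < n) :
    ‖(E * q).coeff i‖ ≤ (∑ s ∈ range n, ‖E.coeff s‖) * B := by
  have hB : 0 ≤ B := (norm_nonneg _).trans (hq 0)
  rw [coeff_mul, Nat.sum_antidiagonal_eq_sum_range_succ_mk, sum_mul]
  calc ‖∑ s ∈ range (i + 1), E.coeff s * q.coeff (i - s)‖
      ≤ ∑ s ∈ range (i + 1), ‖E.coeff s‖ * B :=
        norm_sum_le_of_le _ fun s _ => (norm_mul_le _ _).trans (by gcongr; exact hq _)
    _ ≤ ∑ s ∈ range n, ‖E.coeff s‖ * B :=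
        sum_le_sum_of_subset_of_nonneg (range_subset_range.2 hi) fun _ _ _ => by positivity

/-- Downward induction on `t` through `q_t = (E q)_{m+t} - ∑_{s<m} E_s q_{m+t-s}`. -/
lemma Monic.norm_coeff_le_of_mul {E q : R[X]} {B : ℝ} {N : ℕ} (hE : E.Monic)
    (hEsum : ∑ s ∈ range E.natDegree, ‖E.coeff s‖ ≤ 1) (hB : ∀ n, ‖(E * q).coeff n‖ ≤ B)
    (hdeg : (E * q).natDegree < E.natDegree + N) (t : ℕ) :
    ‖q.coeff t‖ ≤ B * (N - t : ℕ) := by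
  have hB0 : 0 ≤ B := (norm_nonneg _).trans (hB 0)
  have hzero (t : ℕ) (ht : N ≤ t) : q.coeff t = 0 := by
    rcases eq_or_ne q 0 with rfl | hq
    · simp
    · rw [hE.natDegree_mul' hq] at hdeg
      exact coeff_eq_zero_of_natDegree_lt (by omega)
  suffices ∀ d t, N - t ≤ d → ‖q.coeff t‖ ≤ B * (N - t : ℕ) from this _ t le_rfl
  intro d
  induction d with
  | zero =>
    intro t ht
    rw [hzero t (by omega), norm_zero]
    positivity
  | succ d ih =>
    intro t ht
    rcases le_or_gt N t with htN | htN
    · rw [hzero t htN, norm_zero]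
      positivity
    have hhigher : ∀ s ∈ range E.natDegree,
        ‖E.coeff s * q.coeff (E.natDegree + t - s)‖ ≤ ‖E.coeff s‖ * (B * (N - t - 1 : ℕ)) := by
      intro s hs
      have hs := mem_range.1 hs
      refine (norm_mul_le _ _).trans (mul_le_mul_of_nonneg_left ?_ (norm_nonneg _))
      refine (ih (E.natDegree + t - s) (by omega)).trans (mul_le_mul_of_nonneg_left ?_ hB0)
      exact_mod_cast (by omega : N - (E.natDegree + t - s) ≤ N - t - 1)
    calc ‖q.coeff t‖
        = ‖(E * q).coeff (E.natDegree + t)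
            - ∑ s ∈ range E.natDegree, E.coeff s * q.coeff (E.natDegree + t - s)‖ := by
          rw [hE.coeff_mul_natDegree_add q t, add_sub_cancel_right]
      _ ≤ B + (∑ s ∈ range E.natDegree, ‖E.coeff s‖) * (B * (N - t - 1 : ℕ)) := by
          rw [sum_mul]
          exact (norm_sub_le _ _).trans (add_le_add (hB _) (norm_sum_le_of_le _ hhigher))
      _ ≤ B + 1 * (B * (N - t - 1 : ℕ)) := by gcongr
      _ = B * (N - t : ℕ) := by
          rw [show N - t = N - t - 1 + 1 by omega]
          push_cast
          ring

lemma Monic.norm_coeff_le_of_dvd {E P : R[X]} {η B : ℝ} {N : ℕ} (hE : E.Monic) (hdvd : E ∣ P)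
    (hEsum : ∑ s ∈ range E.natDegree, ‖E.coeff s‖ ≤ η) (hη : η ≤ 1)
    (hP : ∀ n, ‖P.coeff n‖ ≤ B) (hdeg : P.natDegree < E.natDegree + N)
    {i : ℕ} (hi : i < E.natDegree) :
    ‖P.coeff i‖ ≤ η * (B * N) := by
  obtain ⟨q, rfl⟩ := hdvd
  have hB : 0 ≤ B := (norm_nonneg _).trans (hP 0)
  have hq (t : ℕ) : ‖q.coeff t‖ ≤ B * N :=
    (hE.norm_coeff_le_of_mul (hEsum.trans hη) hP hdeg t).trans
      (mul_le_mul_of_nonneg_left (by exact_mod_cast N.sub_le t) hB)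
  exact (norm_coeff_mul_le_of_lt E hq hi).trans (by gcongr)

end NormedRing

section NormedField

variable {K : Type*} [NormedField K]

lemma sum_norm_coeff_lt_natDegree_le {p : K[X]} {δ : ℝ} (hp : p.Monic) (hsplit : p.Splits)
    (hroots : ∀ z ∈ p.roots, ‖z‖ ≤ δ) :
    ∑ s ∈ range p.natDegree, ‖p.coeff s‖ ≤ (1 + δ) ^ p.natDegree - 1 := by
  have hcoeff (s : ℕ) : ‖p.coeff s‖ ≤ δ ^ (p.natDegree - s) * p.natDegree.choose s := by
    simpa using coeff_le_of_roots_le (f := RingHom.id K) s hp (by simpa using hsplit)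
      (by simpa using hroots)
  have hbinom : (1 + δ) ^ p.natDegree
      = ∑ s ∈ range p.natDegree, δ ^ (p.natDegree - s) * p.natDegree.choose s + 1 := by
    rw [add_pow, sum_range_succ]
    simp
  rw [hbinom, add_sub_cancel_right]
  exact sum_le_sum fun s _ => hcoeff s

lemma sum_norm_coeff_prod_X_sub_C_le {ι : Type*} [Fintype ι] {f : ι → K} {δ : ℝ} (hδ : 0 ≤ δ)
    (hf : ∀ i, ‖f i‖ ≤ δ) (hcard : Fintype.card ι * δ ≤ 1) :
    ∑ s ∈ range (Fintype.card ι), ‖(∏ i, (X - C (f i))).coeff s‖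
      ≤ 2 * (Fintype.card ι * δ) := by
  have hroots : ∀ z ∈ (∏ i, (X - C (f i))).roots, ‖z‖ ≤ δ := by
    intro z hz
    obtain ⟨i, -, hi⟩ := prod_eq_zero_iff.1 (by simpa [eval_prod] using (mem_roots'.1 hz).2)
    rw [sub_eq_zero.1 hi]
    exact hf i
  have hsum := sum_norm_coeff_lt_natDegree_le (monic_prod_X_sub_C f univ)
    (Splits.prod fun i _ => Splits.X_sub_C (f i)) hroots
  rw [natDegree_finsetProd_X_sub_C_eq_card, card_univ] at hsum
  exact hsum.trans (one_add_pow_sub_one_le hδ hcard)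

end NormedField

end Polynomial

lemma eval_ofFn_eq_vecMul_vander {m k : ℕ} (lam : Fin m → ℝ) (c : Fin k → ℝ) (j : Fin m) :
    (ofFn k c).eval (lam j) = (c ᵥ* vander lam k) j := by
  simp [ofFn_eq_sum_monomial, eval_finsetSum, vecMul, dotProduct, vander]

lemma prod_X_sub_C_dvd_ofFn_sub_of_vecMul_vander_eq {m k : ℕ} {lam : Fin m → ℝ}
    (hlam : Function.Injective lam) {a b : Fin k → ℝ}
    (h : a ᵥ* vander lam k = b ᵥ* vander lam k) :
    ∏ j, (X - C (lam j)) ∣ ofFn k (a - b) :=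
  Fintype.prod_dvd_of_coprime (pairwise_coprime_X_sub_C hlam) fun j => dvd_iff_isRoot.2 <| by
    simp [IsRoot, eval_ofFn_eq_vecMul_vander, h]

theorem consistent_coeffs_close_general {m k : ℕ} (hk : m < k)
    (R ε : ℝ) (hR : 0 < R) (hε0 : 0 < ε) (hε2 : ε < min 2 (3 * R))
    (lam : Fin m → ℝ) (hdist : Function.Injective lam)
    (hlam : ∀ j, |lam j| < ε / (6 * R * ((k : ℝ) - m) * m))
    (a b : Fin k → ℝ)
    (ha : Real.sqrt (∑ i, a i ^ 2) ≤ R) (hb : Real.sqrt (∑ i, b i ^ 2) ≤ R)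
    (hconsistent : a ᵥ* (vander lam k) = b ᵥ* (vander lam k)) :
    ∀ i : Fin k, (i : ℕ) < m → |a i - b i| ≤ ε := by
  intro i him
  have hkm : (1 : ℝ) ≤ k - m := by
    have : (m : ℝ) + 1 ≤ k := by exact_mod_cast hk
    linarith
  have hm : (m : ℝ) ≠ 0 := Nat.cast_ne_zero.2 (by omega)
  set δ := ε / (6 * R * ((k : ℝ) - m) * m)
  have hδ : 0 ≤ δ := div_nonneg hε0.le (by positivity)
  have hmδ : m * δ = ε / (6 * R * (k - m)) := by
    simp only [δ]
    field_simp
  have hmδ_le : 2 * (m * δ) ≤ 1 := by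
    rw [hmδ, ← le_div_iff₀' two_pos, div_le_div_iff₀ (by positivity) two_pos]
    nlinarith [min_le_right 2 (3 * R)]
  have hEsum := sum_norm_coeff_prod_X_sub_C_le hδ
    (fun j => (Real.norm_eq_abs _).trans_le (hlam j).le) (by simp; linarith)
  have hP : ∀ n, ‖(ofFn k (a - b)).coeff n‖ ≤ 2 * R := norm_coeff_ofFn_le (by positivity)
    fun r => (norm_sub_le _ _).trans <| by
      simp only [Real.norm_eq_abs]
      linarith [abs_le_of_sqrt_sum_sq_le ha r, abs_le_of_sqrt_sum_sq_le hb r]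
  have hdeg : (ofFn k (a - b)).natDegree < (∏ j, (X - C (lam j))).natDegree + (k - m) := by
    have := ofFn_natDegree_lt (by omega) (a - b)
    simp only [natDegree_finsetProd_X_sub_C_eq_card, card_univ, Fintype.card_fin]
    omega
  have hPi := (monic_prod_X_sub_C lam univ).norm_coeff_le_of_dvd
    (prod_X_sub_C_dvd_ofFn_sub_of_vecMul_vander_eq hdist hconsistent) (by simpa using hEsum)
    hmδ_le hP hdeg (by simpa using him)
  rw [ofFn_coeff_eq_val_of_lt _ i.isLt, Nat.cast_sub hk.le, hmδ] at hPi
  calc |a i - b i| = ‖(a - b) i‖ := rfl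
    _ ≤ 2 * (ε / (6 * R * (k - m))) * (2 * R * (k - m)) := hPi
    _ ≤ ε := by
        field_simp
        linarith

theorem consistent_coeffs_close {m k : ℕ} (hm : 1 ≤ m) (hk : m < k)
    (R ε : ℝ) (hR : 0 < R) (hε0 : 0 < ε) (hε2 : ε < min 2 (3 * R))
    (lam : Fin m → ℝ) (hdist : Function.Injective lam)
    (hlam : ∀ j, |lam j| < ε / (6 * R * ((k : ℝ) - m) * m))
    (a b : Fin k → ℝ)
    (ha : Real.sqrt (∑ i, a i ^ 2) ≤ R) (hb : Real.sqrt (∑ i, b i ^ 2) ≤ R)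
    (hconsistent : a ᵥ* (vander lam k) = b ᵥ* (vander lam k)) :
    ∀ i : Fin k, (i : ℕ) < m → |a i - b i| ≤ ε :=
  consistent_coeffs_close_general hk R ε hR hε0 hε2 lam hdist hlam a b ha hb hconsistent
end

section
/- Suppose m divides n, A ∈ ℝ^{n×n} is partitioned into column blocks A_1,…,A_m ∈ ℝ^{n×(n/m)} and B ∈ ℝ^{n×n} into row blocks B_1,…,B_m ∈ ℝ^{(n/m)×n}, and ‖A‖_F ≤ η, ‖B‖_F ≤ η. Then every MatDot coefficient matrix satisfies ‖P_l‖_F ≤ η² for each l ∈ {1,…,2m−1}. -/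
open Matrix

/-- Frobenius norm of a real matrix. -/
noncomputable def frobNorm {α β : Type*} [Fintype α] [Fintype β] (M : Matrix α β ℝ) : ℝ :=
  Real.sqrt (∑ i, ∑ j, M i j ^ 2)

/-- The `i`-th column block `A_i ∈ ℝ^{n × (n/m)}` of `A ∈ ℝ^{n × n}` (with `n = m * t`,
columns indexed as `Fin m × Fin t`). Here `i : Fin m` is 0-indexed. -/
def colBlk {m t : ℕ} (A : Matrix (Fin (m * t)) (Fin m × Fin t) ℝ) (i : Fin m) :
    Matrix (Fin (m * t)) (Fin t) ℝ :=
  Matrix.of fun v c => A v (i, c)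

/-- The `j`-th row block `B_j ∈ ℝ^{(n/m) × n}` of `B ∈ ℝ^{n × n}`. -/
def rowBlk {m t : ℕ} (B : Matrix (Fin m × Fin t) (Fin (m * t)) ℝ) (j : Fin m) :
    Matrix (Fin t) (Fin (m * t)) ℝ :=
  Matrix.of fun c w => B (j, c) w

/-- The `l`-th MatDot coefficient matrix (`l` is 1-indexed, `l ∈ {1, …, 2m-1}`):
`P_l = Σ_{i,j ∈ {1,…,m}, i − j = l − m} A_i B_j`.  Here the blocks `i j : Fin m` are
0-indexed, so the defining condition `(i+1) − (j+1) = l − m` reads `i − j = l − m` in `ℤ`. -/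
noncomputable def matDotCoeff {m t : ℕ}
    (A : Matrix (Fin (m * t)) (Fin m × Fin t) ℝ)
    (B : Matrix (Fin m × Fin t) (Fin (m * t)) ℝ) (l : ℕ) :
    Matrix (Fin (m * t)) (Fin (m * t)) ℝ :=
  ∑ i : Fin m, ∑ j : Fin m,
    if (i : ℤ) - (j : ℤ) = (l : ℤ) - (m : ℤ) then colBlk A i * rowBlk B j else 0

/-!
`P_l` is the sum of the products `A_i B_j` over the pairs on one diagonal `i - j = l - m`, and on
a diagonal each index determines the other. Hence the triangle inequality, submultiplicativity of
the Frobenius norm and Cauchy–Schwarz give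
`‖P_l‖ ≤ Σ ‖A_i‖ ‖B_j‖ ≤ (Σ_i ‖A_i‖²)^{1/2} (Σ_j ‖B_j‖²)^{1/2} = ‖A‖ ‖B‖ ≤ η²`.
-/

lemma Finset.sum_comp_le_sum_of_injOn {α ι M : Type*} [Fintype ι] [AddCommMonoid M]
    [PartialOrder M] [IsOrderedAddMonoid M] (s : Finset α) {e : α → ι} (he : Set.InjOn e s)
    {f : ι → M} (hf : ∀ i, 0 ≤ f i) : ∑ a ∈ s, f (e a) ≤ ∑ i, f i := by
  classical
  rw [← Finset.sum_image he]
  exact Finset.sum_le_sum_of_subset_of_nonneg (Finset.subset_univ _) fun i _ _ => hf i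

lemma Finset.sum_mul_le_sqrt_mul_sqrt_of_injOn {ι κ : Type*} [Fintype ι] [Fintype κ]
    (s : Finset (ι × κ)) (h₁ : Set.InjOn Prod.fst (s : Set (ι × κ)))
    (h₂ : Set.InjOn Prod.snd (s : Set (ι × κ)))
    (f : ι → ℝ) (g : κ → ℝ) :
    ∑ p ∈ s, f p.1 * g p.2 ≤ √(∑ i, f i ^ 2) * √(∑ j, g j ^ 2) :=
  (Real.sum_mul_le_sqrt_mul_sqrt s _ _).trans <|
    mul_le_mul (Real.sqrt_le_sqrt <| s.sum_comp_le_sum_of_injOn h₁ fun _ => sq_nonneg _)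
      (Real.sqrt_le_sqrt <| s.sum_comp_le_sum_of_injOn h₂ fun _ => sq_nonneg _)
      (Real.sqrt_nonneg _) (Real.sqrt_nonneg _)

section Frobenius

attribute [local instance] Matrix.frobeniusNormedAddCommGroup

variable {α β γ : Type*} [Fintype α] [Fintype β] [Fintype γ]

lemma frobNorm_eq_norm (M : Matrix α β ℝ) : frobNorm M = ‖M‖ := by
  rw [frobNorm, Matrix.frobenius_norm_def, Real.sqrt_eq_rpow]
  simp_rw [Real.rpow_two, Real.norm_eq_abs, sq_abs]

lemma frobNorm_nonneg (M : Matrix α β ℝ) : 0 ≤ frobNorm M := Real.sqrt_nonneg _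

lemma sq_frobNorm (M : Matrix α β ℝ) : frobNorm M ^ 2 = ∑ i, ∑ j, M i j ^ 2 :=
  Real.sq_sqrt <| Finset.sum_nonneg fun _ _ => Finset.sum_nonneg fun _ _ => sq_nonneg _

lemma frobNorm_sum_le {ι : Type*} (s : Finset ι) (f : ι → Matrix α β ℝ) :
    frobNorm (∑ k ∈ s, f k) ≤ ∑ k ∈ s, frobNorm (f k) := by
  simpa only [frobNorm_eq_norm] using norm_sum_le s f

lemma frobNorm_mul_le (M : Matrix α β ℝ) (N : Matrix β γ ℝ) :
    frobNorm (M * N) ≤ frobNorm M * frobNorm N := by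
  simpa only [frobNorm_eq_norm] using Matrix.frobenius_norm_mul M N

end Frobenius

section Blocks

variable {m t : ℕ}

lemma sum_sq_frobNorm_colBlk (A : Matrix (Fin (m * t)) (Fin m × Fin t) ℝ) :
    ∑ i, frobNorm (colBlk A i) ^ 2 = frobNorm A ^ 2 := by
  simp only [sq_frobNorm, colBlk, Matrix.of_apply, Fintype.sum_prod_type]
  exact Finset.sum_comm

lemma sum_sq_frobNorm_rowBlk (B : Matrix (Fin m × Fin t) (Fin (m * t)) ℝ) :
    ∑ j, frobNorm (rowBlk B j) ^ 2 = frobNorm B ^ 2 := by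
  simp only [sq_frobNorm, rowBlk, Matrix.of_apply, Fintype.sum_prod_type]

def matDotPairs (m : ℕ) (d : ℤ) : Finset (Fin m × Fin m) :=
  Finset.univ.filter fun p => (p.1 : ℤ) - p.2 = d

lemma injOn_fst_matDotPairs (d : ℤ) :
    Set.InjOn Prod.fst (matDotPairs m d : Set (Fin m × Fin m)) := by
  rintro ⟨i, j⟩ hij ⟨i', j'⟩ hij' (rfl : i = i')
  simp only [matDotPairs, Finset.mem_coe, Finset.mem_filter, Finset.mem_univ, true_and] at hij hij'
  simp only [Prod.mk.injEq, true_and]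
  omega

lemma injOn_snd_matDotPairs (d : ℤ) :
    Set.InjOn Prod.snd (matDotPairs m d : Set (Fin m × Fin m)) := by
  rintro ⟨i, j⟩ hij ⟨i', j'⟩ hij' (rfl : j = j')
  simp only [matDotPairs, Finset.mem_coe, Finset.mem_filter, Finset.mem_univ, true_and] at hij hij'
  simp only [Prod.mk.injEq, and_true]
  omega

lemma matDotCoeff_eq_sum (A : Matrix (Fin (m * t)) (Fin m × Fin t) ℝ)
    (B : Matrix (Fin m × Fin t) (Fin (m * t)) ℝ) (l : ℕ) :
    matDotCoeff A B l = ∑ p ∈ matDotPairs m (l - m), colBlk A p.1 * rowBlk B p.2 := by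
  rw [matDotCoeff, matDotPairs, Finset.sum_filter, ← Finset.univ_product_univ,
    Finset.sum_product]

end Blocks

theorem matdot_coeff_frobenius_bound_general {m t : ℕ} (η : ℝ)
    (A : Matrix (Fin (m * t)) (Fin m × Fin t) ℝ)
    (B : Matrix (Fin m × Fin t) (Fin (m * t)) ℝ)
    (hA : frobNorm A ≤ η) (hB : frobNorm B ≤ η) :
    ∀ l ∈ Finset.Icc 1 (2 * m - 1), frobNorm (matDotCoeff A B l) ≤ η ^ 2 := by
  intro l _
  calc frobNorm (matDotCoeff A B l)
      ≤ ∑ p ∈ matDotPairs m (l - m), frobNorm (colBlk A p.1) * frobNorm (rowBlk B p.2) := by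
        rw [matDotCoeff_eq_sum]
        exact (frobNorm_sum_le _ _).trans (Finset.sum_le_sum fun p _ => frobNorm_mul_le _ _)
    _ ≤ √(∑ i, frobNorm (colBlk A i) ^ 2) * √(∑ j, frobNorm (rowBlk B j) ^ 2) :=
        Finset.sum_mul_le_sqrt_mul_sqrt_of_injOn _ (injOn_fst_matDotPairs _)
          (injOn_snd_matDotPairs _) (frobNorm ∘ colBlk A) (frobNorm ∘ rowBlk B)
    _ = frobNorm A * frobNorm B := by
        rw [sum_sq_frobNorm_colBlk, sum_sq_frobNorm_rowBlk, Real.sqrt_sq (frobNorm_nonneg A),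
          Real.sqrt_sq (frobNorm_nonneg B)]
    _ ≤ η ^ 2 := by
        rw [sq]
        exact mul_le_mul hA hB (frobNorm_nonneg B) ((frobNorm_nonneg A).trans hA)

theorem matdot_coeff_frobenius_bound {m t : ℕ} (hm : 1 ≤ m) (η : ℝ)
    (A : Matrix (Fin (m * t)) (Fin m × Fin t) ℝ)
    (B : Matrix (Fin m × Fin t) (Fin (m * t)) ℝ)
    (hA : frobNorm A ≤ η) (hB : frobNorm B ≤ η) :
    ∀ l ∈ Finset.Icc 1 (2 * m - 1), frobNorm (matDotCoeff A B l) ≤ η ^ 2 :=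
  matdot_coeff_frobenius_bound_general η A B hA hB
end

section
/- Let m ≥ 1 and let x_1,…,x_m be distinct real numbers. Then for every integer l ≥ 0, Σ_{i=1}^{m} x_i^{m−1+l} / ∏_{j≠i}(x_i − x_j) = h_l(x_1,…,x_m), where h_l is the complete homogeneous symmetric polynomial of degree l. -/
/-!
Write `S(x, k) = ∑ᵢ xᵢ ^ k / ∏_{j ≠ i} (xᵢ - xⱼ)`. Splitting off the node `x₀`, both sides satisfy
the same recursion in the degree: `S(x, k + 1) = x₀ S(x, k) + S((x₁, …), k)`, because the factor
`xᵢ - x₀` cancels the `j = 0` factor of the denominator (and kills the `i = 0` term), while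
`h_{l+1}(x) = x₀ h_l(x) + h_{l+1}(x₁, …)` by sorting monomials by whether they contain `x₀`.
Induction on the number of nodes and on `l` thus reduces the claim to `l = 0`, where `S(x, m - 1)`
is the coefficient of `X ^ (m - 1)` in the Lagrange interpolant of `X ^ (m - 1)`, that is `1`.
-/

open Finset Polynomial

theorem Fin.prod_erase_succ {M : Type*} [CommMonoid M] {n : ℕ} (f : Fin (n + 1) → M)
    (i : Fin n) : ∏ j ∈ univ.erase i.succ, f j = f 0 * ∏ j ∈ univ.erase i, f j.succ := by
  have herase : univ.erase i.succ = insert 0 ((univ.erase i).map (Fin.succEmb n)) := by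
    ext j
    refine Fin.cases ?_ (fun j => ?_) j <;> simp [eq_comm]
  rw [herase, prod_insert (by simp), prod_map]
  rfl

section DividedDifference

variable {K : Type*} [Field K] {n : ℕ}

def powDividedDifference (x : Fin n → K) (k : ℕ) : K :=
  ∑ i, x i ^ k / ∏ j ∈ univ.erase i, (x i - x j)

theorem powDividedDifference_of_lt {x : Fin n → K} (hx : Function.Injective x) {k : ℕ}
    (hk : k < n) : powDividedDifference x k = if k = n - 1 then 1 else 0 := by
  have hcoeff := Lagrange.coeff_eq_sum (s := univ) hx.injOn (P := X ^ k)
    (by rw [degree_X_pow, card_univ, Fintype.card_fin]; exact_mod_cast hk)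
  simp only [card_univ, Fintype.card_fin, coeff_X_pow, eval_pow, eval_X] at hcoeff
  rw [powDividedDifference, ← hcoeff]
  simp only [eq_comm]

theorem powDividedDifference_succ {x : Fin (n + 1) → K} (hx : Function.Injective x) (k : ℕ) :
    powDividedDifference x (k + 1) =
      x 0 * powDividedDifference x k + powDividedDifference (Fin.tail x) k := by
  have hsplit : ∀ i, x i ^ (k + 1) / ∏ j ∈ univ.erase i, (x i - x j) =
      x 0 * (x i ^ k / ∏ j ∈ univ.erase i, (x i - x j)) +
        (x i - x 0) * x i ^ k / ∏ j ∈ univ.erase i, (x i - x j) := fun i => by ring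
  have hcancel : ∀ i : Fin n,
      (x i.succ - x 0) * x i.succ ^ k / ∏ j ∈ univ.erase i.succ, (x i.succ - x j) =
        Fin.tail x i ^ k / ∏ j ∈ univ.erase i, (Fin.tail x i - Fin.tail x j) := fun i => by
    rw [Fin.prod_erase_succ, mul_div_mul_left _ _ (sub_ne_zero.2 (hx.ne (Fin.succ_ne_zero i)))]
    rfl
  rw [powDividedDifference, sum_congr rfl fun i _ => hsplit i, sum_add_distrib, ← mul_sum]
  congr 1
  rw [Fin.sum_univ_succ, sub_self, zero_mul, zero_div, zero_add]
  exact sum_congr rfl fun i _ => hcancel i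

end DividedDifference

section CompleteHomogeneous

variable {R : Type*} [CommSemiring R] {n : ℕ}

def completeHomogeneous (x : Fin n → R) (l : ℕ) : R :=
  ∑ d ∈ Nat.antidiagonalTuple n l, ∏ i, x i ^ d i

@[simp]
theorem completeHomogeneous_zero (x : Fin n → R) : completeHomogeneous x 0 = 1 := by
  simp [completeHomogeneous, Nat.antidiagonalTuple_zero_right]

theorem completeHomogeneous_eq_sum_antidiagonal (x : Fin (n + 1) → R) (l : ℕ) :
    completeHomogeneous x l =
      ∑ p ∈ antidiagonal l, x 0 ^ p.1 * completeHomogeneous (Fin.tail x) p.2 := by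
  simp only [completeHomogeneous, mul_sum]
  rw [sum_sigma']
  refine sum_bij' (fun d _ => ⟨(d 0, l - d 0), Fin.tail d⟩) (fun q _ => Fin.cons q.1.1 q.2)
    ?_ ?_ ?_ ?_ ?_
  · intro d hd
    rw [Nat.mem_antidiagonalTuple, Fin.sum_univ_succ] at hd
    simp only [mem_sigma, HasAntidiagonal.mem_antidiagonal, Nat.mem_antidiagonalTuple, Fin.tail]
    omega
  · rintro ⟨⟨a, b⟩, e⟩ hq
    simp only [mem_sigma, HasAntidiagonal.mem_antidiagonal, Nat.mem_antidiagonalTuple] at hq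
    simp [Nat.mem_antidiagonalTuple, Fin.sum_univ_succ, hq.1, hq.2]
  · intro d _
    simp
  · rintro ⟨⟨a, b⟩, e⟩ hq
    simp only [mem_sigma, HasAntidiagonal.mem_antidiagonal, Nat.mem_antidiagonalTuple] at hq
    simp only [Fin.cons_zero, Fin.tail_cons]
    congr
    omega
  · intro d _
    simp [Fin.prod_univ_succ, Fin.tail]

theorem completeHomogeneous_succ (x : Fin (n + 1) → R) (l : ℕ) :
    completeHomogeneous x (l + 1) =
      x 0 * completeHomogeneous x l + completeHomogeneous (Fin.tail x) (l + 1) := by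
  rw [completeHomogeneous_eq_sum_antidiagonal, Nat.sum_antidiagonal_succ,
    completeHomogeneous_eq_sum_antidiagonal, mul_sum]
  simp only [pow_zero, one_mul, pow_succ', mul_assoc]
  exact add_comm _ _

end CompleteHomogeneous

theorem powDividedDifference_add_eq_completeHomogeneous {K : Type*} [Field K] {m : ℕ}
    {x : Fin (m + 1) → K} (hx : Function.Injective x) (l : ℕ) :
    powDividedDifference x (m + l) = completeHomogeneous x l := by
  induction m generalizing l with
  | zero => simp [powDividedDifference, completeHomogeneous]
  | succ m ihm =>
    induction l with
    | zero => simp [powDividedDifference_of_lt hx (Nat.lt_succ_self _)]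
    | succ l ihl =>
      rw [completeHomogeneous_succ x, ← add_assoc, powDividedDifference_succ hx, ihl,
        show m + 1 + l = m + (l + 1) by omega,
        ihm (x := Fin.tail x) (hx.comp (Fin.succ_injective _))]

theorem sum_ratio_eq_hsymm {m : ℕ} (hm : 1 ≤ m) (x : Fin m → ℝ)
    (hdist : Function.Injective x) (l : ℕ) :
    ∑ i : Fin m, x i ^ (m - 1 + l) / ∏ j ∈ Finset.univ.erase i, (x i - x j)
      = ∑ d ∈ Finset.Nat.antidiagonalTuple m l, ∏ i : Fin m, x i ^ d i := by
  obtain ⟨m, rfl⟩ : ∃ m', m = m' + 1 := ⟨m - 1, by omega⟩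
  rw [Nat.add_sub_cancel]
  exact powDividedDifference_add_eq_completeHomogeneous hdist l
end
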